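/- arXiv:0909.2274 — 7 statements merged into one kernel-verified Lean document; each statement's English description precedes it below -/
import Mathlib

section
/- Let w be an infinite word over a totally ordered alphabet and suppose the first n left-shifts of w are pairwise comparable with relative order given by a permutation π of {1,...,n} (i.e., the (i-1)-fold shift of w is lexicographically less than the (j-1)-fold shift iff π(i) < π(j)). If 1 ≤ i, j < n, π(i) < π(j), and π(i+1) > π(j+1), then w_i < w_j. -/
/-! The shifts starting at `i` and `j` compare as `π i < π j`, so their first letters satisfy
`w i ≤ w j`. If the letters were equal, the comparison would be decided strictly after the
first letter, so the shifts starting at `i + 1` and `j + 1` would compare the same way,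
contradicting `π (j + 1) < π (i + 1)`. -/

/-- Strict lexicographic order on infinite words. -/
def LexLt {α : Type*} [LinearOrder α] (x y : ℕ → α) : Prop :=
  ∃ k, (∀ i < k, x i = y i) ∧ x k < y k

/-- `Pat w n π` : the first `n` left shifts of `w` are lexicographically ordered
according to the permutation `π` (0-indexed). -/
def Pat {α : Type*} [LinearOrder α] (w : ℕ → α) (n : ℕ) (π : Equiv.Perm (Fin n)) : Prop :=
  ∀ i j : Fin n, (LexLt (fun m => w (m + i.val)) (fun m => w (m + j.val)) ↔ π i < π j)

namespace LexLt

variable {α : Type*} [LinearOrder α] {x y : ℕ → α}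

theorem head_le (h : LexLt x y) : x 0 ≤ y 0 := by
  obtain ⟨k, hagree, hk⟩ := h
  rcases Nat.eq_zero_or_pos k with rfl | hpos
  · exact hk.le
  · exact (hagree 0 hpos).le

theorem tail_of_head_eq (h : LexLt x y) (h0 : x 0 = y 0) :
    LexLt (fun m => x (m + 1)) (fun m => y (m + 1)) := by
  obtain ⟨k, hagree, hk⟩ := h
  obtain ⟨k, rfl⟩ : ∃ k', k = k' + 1 := by
    rcases k with _ | k
    · exact absurd h0 hk.ne
    · exact ⟨k, rfl⟩
  exact ⟨k, fun m hm => hagree (m + 1) (by omega), hk⟩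

theorem shift_succ {w : ℕ → α} {a b : ℕ}
    (h : LexLt (fun m => w (m + a)) (fun m => w (m + b))) (hab : w a = w b) :
    LexLt (fun m => w (m + (a + 1))) (fun m => w (m + (b + 1))) := by
  have := h.tail_of_head_eq (by simpa using hab)
  simpa only [add_right_comm _ 1, add_assoc] using this

end LexLt

theorem stmt0 {α : Type*} [LinearOrder α] {n : ℕ} (w : ℕ → α) (π : Equiv.Perm (Fin n))
    (hPat : Pat w n π) (i j : Fin n) (hi : i.val + 1 < n) (hj : j.val + 1 < n)
    (h1 : π i < π j) (h2 : π ⟨j.val + 1, hj⟩ < π ⟨i.val + 1, hi⟩) :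
    w i.val < w j.val := by
  have hlex := (hPat i j).mpr h1
  have hle : w i.val ≤ w j.val := by simpa using hlex.head_le
  refine hle.lt_of_ne fun heq => h2.not_gt ?_
  exact (hPat ⟨i.val + 1, hi⟩ ⟨j.val + 1, hj⟩).mp (hlex.shift_succ heq)
end

section
/- Suppose Pat(w, Σ, n) = π for an infinite word w over a linearly ordered alphabet and π a permutation of {1,...,n}. If 1 ≤ i < k ≤ n and |π(i) − π(k)| = 1, then the finite factor w_i w_{i+1} ... w_{k−1} is a primitive word (not a proper power of a shorter word). -/
/-- A finite word is primitive if it is not an `m`-fold power with `m > 1`. -/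
def Primitive {α : Type*} (u : List α) : Prop :=
  ∀ (q : List α) (m : ℕ), 1 < m → u ≠ (List.replicate m q).flatten

/-!
If `w_i ⋯ w_{k-1} = q^m` with `m ≥ 2` and `p = |q|`, the suffixes of `w` starting at
`i, i + p, …, i + m p = k` all compare in the same direction: consecutive ones agree on a
prefix of length `a p` by periodicity, and stripping that common prefix reduces the comparison
of the `a`-th pair to that of the first. So the suffix at `i + p` lies strictly between those
at `i` and `k`, and hence so does its rank under `π`, contradicting `|π i - π k| = 1`.
-/

def shift {α : Type*} (w : ℕ → α) (j : ℕ) : ℕ → α := fun t => w (t + j)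

theorem shift_zero {α : Type*} (w : ℕ → α) : shift w 0 = w := rfl

theorem shift_shift {α : Type*} (w : ℕ → α) (i j : ℕ) : shift (shift w i) j = shift w (j + i) := by
  funext t
  simp only [shift, add_assoc]

theorem List.getElem_add_length_eq_of_eq_flatten_replicate {α : Type*} {u q : List α} {m t : ℕ}
    (hu : u = (List.replicate m q).flatten) (ht : t + q.length < u.length) :
    u[t + q.length] = u[t] := by
  obtain _ | m := m
  · simp [hu] at ht
  set v := (List.replicate m q).flatten
  have hqv : u = q ++ v := by simp [hu, List.replicate_succ, v]
  have hvq : u = v ++ q := by rw [hu, List.replicate_succ']; simp [v]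
  have htv : t < v.length := by
    have := congrArg List.length hqv
    simp at this
    omega
  calc u[t + q.length] = (q ++ v)[t + q.length]'(by simpa [← hqv]) := List.getElem_of_eq hqv _
    _ = v[t] := (List.getElem_append_right' q htv).symm
    _ = (v ++ q)[t]'(by simp; omega) := (List.getElem_append_left htv).symm
    _ = u[t] := (List.getElem_of_eq hvq _).symm

section LexOrder

variable {α : Type*} [LinearOrder α]

theorem toLex_shift_lt_toLex_shift_iff {x y : ℕ → α} {N : ℕ} (h : ∀ t < N, x t = y t) :
    toLex (shift x N) < toLex (shift y N) ↔ toLex x < toLex y := by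
  constructor
  · rintro ⟨c, hc, hlt⟩
    refine ⟨c + N, fun t ht => ?_, hlt⟩
    rcases lt_or_ge t N with htN | htN
    · exact h t htN
    · simpa [shift, Nat.sub_add_cancel htN] using hc (t - N) (by omega)
  · rintro ⟨c, hc, hlt⟩
    obtain ⟨d, rfl⟩ : ∃ d, c = d + N := ⟨c - N, by
      by_contra! hcN
      exact hlt.ne (h c (by omega))⟩
    exact ⟨d, fun t ht => hc (t + N) (by omega), hlt⟩

theorem toLex_shift_between_of_periodic {v : ℕ → α} {p m : ℕ} (hm : 2 ≤ m)
    (hper : ∀ t, t + p < m * p → v (t + p) = v t) (hne : toLex v ≠ toLex (shift v p)) :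
    (toLex v < toLex (shift v p) ∧ toLex (shift v p) < toLex (shift v (m * p))) ∨
      (toLex (shift v (m * p)) < toLex (shift v p) ∧ toLex (shift v p) < toLex v) := by
  set f : ℕ → Lex (ℕ → α) := fun a => toLex (shift v (a * p))
  have hf0 : f 0 = toLex v := by simp [f, shift_zero]
  have hf1 : f 1 = toLex (shift v p) := by simp [f]
  have hf_succ : ∀ a, f (a + 1) = toLex (shift (shift v p) (a * p)) := by
    simp [f, shift_shift, add_one_mul]
  have step : ∀ a < m, (f a < f (a + 1) ↔ f 0 < f 1) ∧ (f (a + 1) < f a ↔ f 1 < f 0) := by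
    intro a ha
    have agree : ∀ t < a * p, v t = shift v p t := fun t ht =>
      (hper t (by nlinarith [Nat.mul_le_mul_right p (Nat.succ_le_of_lt ha)])).symm
    rw [hf_succ, hf0, hf1]
    exact ⟨toLex_shift_lt_toLex_shift_iff agree,
      toLex_shift_lt_toLex_shift_iff fun t ht => (agree t ht).symm⟩
  have h1 : (1 : ℕ) ∈ Set.Iic m := Set.mem_Iic.2 (by omega)
  have hmm : m ∈ Set.Iic m := Set.mem_Iic.2 le_rfl
  rw [← hf0, ← hf1] at hne ⊢
  rcases hne.lt_or_gt with h | h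
  · refine Or.inl ⟨h, strictMonoOn_Iic_of_lt_succ (ψ := f) (fun a ha => ?_) h1 hmm (by omega)⟩
    rw [Order.succ_eq_add_one]
    exact (step a ha).1.2 h
  · refine Or.inr ⟨strictAntiOn_Iic_of_succ_lt (ψ := f) (fun a ha => ?_) h1 hmm (by omega), h⟩
    rw [Order.succ_eq_add_one]
    exact (step a ha).2.2 h

variable {w : ℕ → α} {n : ℕ} {π : Equiv.Perm (Fin n)}

theorem Pat.lt_iff (hPat : Pat w n π) (a b : Fin n) :
    π a < π b ↔ toLex (shift w a) < toLex (shift w b) :=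
  (hPat a b).symm

theorem Pat.toLex_shift_injective (hPat : Pat w n π) :
    Function.Injective fun a : Fin n => toLex (shift w a) := by
  intro a b hab
  apply π.injective
  refine le_antisymm (not_lt.1 fun h => ?_) (not_lt.1 fun h => ?_)
  · exact ((hPat.lt_iff b a).1 h).ne' hab
  · exact ((hPat.lt_iff a b).1 h).ne hab

end LexOrder

theorem stmt1 {α : Type*} [LinearOrder α] {n : ℕ} (w : ℕ → α) (π : Equiv.Perm (Fin n))
    (hPat : Pat w n π) (i k : Fin n) (hik : i < k)
    (hadj : (π i).val + 1 = (π k).val ∨ (π k).val + 1 = (π i).val) :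
    Primitive (List.ofFn (fun m : Fin (k.val - i.val) => w (i.val + m.val))) := by
  intro q m hm hu
  set p := q.length
  have hlen : k - i = m * p := by simpa [Nat.mul_comm] using congrArg List.length hu
  have hp : 0 < p := Nat.pos_of_ne_zero fun h => by simp [h] at hlen; omega
  have hper : ∀ t, t + p < m * p → shift w i (t + p) = shift w i t := by
    intro t ht
    have := List.getElem_add_length_eq_of_eq_flatten_replicate hu (t := t) (by simpa [hlen])
    simpa [shift, add_comm, add_left_comm] using this
  have hk : m * p + i = k := by have := Fin.lt_def.1 hik; omega
  let j : Fin n := ⟨i + p, by nlinarith [k.isLt]⟩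
  have hij : i ≠ j := Fin.ne_of_val_ne (by simp [j]; omega)
  have key := toLex_shift_between_of_periodic hm hper
    (by rw [shift_shift, add_comm]; exact hPat.toLex_shift_injective.ne hij)
  rw [shift_shift, shift_shift, hk, add_comm p, show (i : ℕ) + p = j from rfl] at key
  simp only [← hPat.lt_iff, Fin.lt_def] at key
  omega
end

section
/- Let N(π) be the least N such that π is realized by the shift on N symbols (i.e., there is an infinite word w over {0,...,N−1} with Pat(w, Σ, n) = π). For every permutation π of {1,...,n} with n ≥ 3, N(π) ≤ n − 1. -/
/-- `N(π)`: the least alphabet size `N` such that `π` is realized by the shift on `N` symbols. -/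
noncomputable def minN {n : ℕ} (π : Equiv.Perm (Fin n)) : ℕ :=
  sInf {N | ∃ w : ℕ → ℕ, (∀ i, w i < N) ∧ Pat w n π}


/-!
Take the `n`-periodic word whose `k`-th letter is the rank `π (k mod n)` and merge two adjacent
ranks `a`, `a + 1` into one letter; this leaves `n - 1` letters. It suffices to compare shifts of
consecutive ranks. Those whose first letters differ are ordered by them; the two shifts starting
with the merged letter are ordered by their second letters, which come out right as soon as
`f := π ∘ (· + 1) ∘ π⁻¹` satisfies `f a < f (a + 1)` (equal letters would force a fixed point of
`f`). Such an `a` exists: otherwise `f` is strictly decreasing, hence the reversal of `Fin n`, an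
involution, while `f ∘ f` has no fixed point once `n ≥ 3`.
-/

open Function

section Lex
variable {α : Type*} [LinearOrder α] {x y : ℕ → α}

theorem lexLt_iff_toLex_lt : LexLt x y ↔ toLex x < toLex y := Iff.rfl

theorem toLex_lt_of_head_lt (h : x 0 < y 0) : toLex x < toLex y :=
  ⟨0, fun _ hj => absurd hj (Nat.not_lt_zero _), h⟩

theorem toLex_lt_of_head_eq_of_lt (h₀ : x 0 = y 0) (h₁ : x 1 < y 1) : toLex x < toLex y :=
  ⟨1, fun j hj => by rwa [Nat.lt_one_iff.1 hj], h₁⟩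

theorem pat_of_strictMono {w : ℕ → α} {n : ℕ} {π : Equiv.Perm (Fin n)}
    (h : StrictMono fun v => toLex fun k => w (k + (π.symm v).val)) : Pat w n π := fun i j => by
  have h' := h.lt_iff_lt (a := π i) (b := π j)
  simp only [Equiv.symm_apply_apply] at h'
  exact lexLt_iff_toLex_lt.trans h'

end Lex

namespace Fin

theorem eq_rev_of_strictAnti {m : ℕ} {f : Fin m → Fin m} (hf : StrictAnti f) : f = rev :=
  funext fun x => rev_eq_iff.1 (congrFun (rev_strictAnti.comp hf).eq_id x)

theorem exists_apply_castSucc_lt_apply_succ {m : ℕ} {f : Fin (m + 1) → Fin (m + 1)}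
    (hf : Injective f) (h₀ : f (f 0) ≠ 0) : ∃ a : Fin m, f a.castSucc < f a.succ := by
  by_contra! h
  have : StrictAnti f := strictAnti_iff_succ_lt.2 fun a =>
    (h a).lt_of_ne (hf.ne castSucc_lt_succ.ne')
  rw [eq_rev_of_strictAnti this] at h₀
  exact h₀ (rev_rev 0)

theorem predAbove_lt_predAbove {m : ℕ} {a : Fin m} {u v : Fin (m + 1)} (huv : u < v)
    (h : ¬(u = a.castSucc ∧ v = a.succ)) : a.predAbove u < a.predAbove v := by
  simp only [predAbove, Fin.lt_def, Fin.ext_iff, val_castSucc, val_succ] at *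
  split_ifs <;> simp only [val_pred, coe_castPred] <;> omega

theorem add_one_add_one_ne_self {m : ℕ} (hm : 2 ≤ m) (x : Fin (m + 1)) : x + 1 + 1 ≠ x := by
  rw [add_assoc, Ne, add_eq_left, Fin.ext_iff]
  simp [Fin.val_add, Nat.one_mod_eq_one.2 (by omega : m + 1 ≠ 1),
    Nat.mod_eq_of_lt (by omega : 2 < m + 1)]

end Fin

def mergedWord {m : ℕ} (π : Equiv.Perm (Fin (m + 1))) (a : Fin m) (k : ℕ) : ℕ :=
  a.predAbove (π (Fin.ofNat (m + 1) k))

section MergedWord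
variable {m : ℕ} {π : Equiv.Perm (Fin (m + 1))} {a : Fin m}

theorem mergedWord_lt (k : ℕ) : mergedWord π a k < m :=
  (a.predAbove _).isLt

theorem mergedWord_val (i : Fin (m + 1)) : mergedWord π a i = a.predAbove (π i) := by
  simp [mergedWord]

theorem mergedWord_one_add_val (i : Fin (m + 1)) :
    mergedWord π a (1 + i) = a.predAbove (π (i + 1)) := by
  rw [mergedWord, Nat.add_comm 1]
  congr 3
  ext
  simp [Fin.val_add]

theorem pat_mergedWord (ha : π (π.symm a.castSucc + 1) < π (π.symm a.succ + 1)) :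
    Pat (mergedWord π a) (m + 1) π := by
  have : NeZero m := ⟨a.pos.ne'⟩
  refine pat_of_strictMono (Fin.strictMono_iff_lt_succ.2 fun b => ?_)
  by_cases hb : b = a
  · subst hb
    refine toLex_lt_of_head_eq_of_lt (by simp [mergedWord_val]) ?_
    simp only [mergedWord_one_add_val, Fin.val_fin_lt]
    refine Fin.predAbove_lt_predAbove ha ?_
    rintro ⟨h, -⟩
    rw [← Equiv.eq_symm_apply] at h
    simp at h
  · refine toLex_lt_of_head_lt ?_
    simp only [zero_add, mergedWord_val, Equiv.apply_symm_apply, Fin.val_fin_lt]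
    exact Fin.predAbove_lt_predAbove Fin.castSucc_lt_succ
      fun h => hb (Fin.castSucc_injective _ h.1)

end MergedWord

/-- For `n ≥ 3`, every permutation of length `n` is realized on `n - 1` symbols. -/
theorem stmt6 {n : ℕ} (hn : 3 ≤ n) (π : Equiv.Perm (Fin n)) : minN π ≤ n - 1 := by
  obtain ⟨m, rfl⟩ : ∃ m, n = m + 1 := ⟨n - 1, by omega⟩
  obtain ⟨a, ha⟩ := Fin.exists_apply_castSucc_lt_apply_succ (f := fun v => π (π.symm v + 1))
    (π.injective.comp ((add_left_injective 1).comp π.symm.injective))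
    (by simpa [← Equiv.eq_symm_apply] using
      Fin.add_one_add_one_ne_self (m := m) (by omega) (π.symm 0))
  exact Nat.sInf_le ⟨mergedWord π a, mergedWord_lt, pat_mergedWord ha⟩
end

section
/- For every n ≥ 2 and N ≥ 2, the number a_{n,N} of permutations π ∈ S_n with N(π) = N is even. -/
/-!
Reversing the alphabet, `a ↦ N - 1 - a`, reverses the lexicographic order of words, so a word
realizing `π` on `N` letters is sent to a word realizing the complement `i ↦ rev (π i)` on the
same alphabet. Complementation is therefore an involution of `{π | N(π) = N}`, and it has no fixed
point once `n ≥ 2`, because `rev 0 ≠ 0`. A finite set carrying a fixed-point-free involution has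
even cardinality.
-/

theorem Function.Involutive.even_natCard_of_ne_self {α : Type*} [Finite α] {f : α → α}
    (hf : Function.Involutive f) (hne : ∀ x, f x ≠ x) : Even (Nat.card α) := by
  classical
  have := Fintype.ofFinite α
  let g : Function.End α := f
  have hg : g ^ 2 ^ 1 = 1 := funext hf
  have : IsEmpty g.fixedPoints := ⟨fun x => hne x.1 x.2⟩
  have hmod := Equiv.Perm.card_fixedPoints_modEq (p := 2) hg
  rw [Fintype.card_eq_zero (α := g.fixedPoints)] at hmod
  rw [Nat.card_eq_fintype_card, Nat.even_iff]
  exact hmod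

theorem LexLt.comp_strictAntiOn_iff {α β : Type*} [LinearOrder α] [LinearOrder β] {f : α → β}
    {s : Set α} (hf : StrictAntiOn f s) {x y : ℕ → α} (hx : ∀ i, x i ∈ s) (hy : ∀ i, y i ∈ s) :
    LexLt (f ∘ x) (f ∘ y) ↔ LexLt y x := by
  unfold LexLt
  refine exists_congr fun k => and_congr (forall₂_congr fun i _ => ?_) (hf.lt_iff_gt (hx k) (hy k))
  exact (hf.injOn.eq_iff (hx i) (hy i)).trans eq_comm

/-- The complement `π'(j) = n + 1 - π(j)` of a permutation, written 0-indexed. -/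
def Equiv.Perm.complement {n : ℕ} (π : Equiv.Perm (Fin n)) : Equiv.Perm (Fin n) :=
  π.trans Fin.revPerm

namespace Equiv.Perm

variable {n : ℕ}

theorem complement_involutive : Function.Involutive (complement (n := n)) := fun π => by
  ext i
  simp [complement]

theorem complement_ne_self (hn : 2 ≤ n) (π : Equiv.Perm (Fin n)) : complement π ≠ π := by
  intro h
  have hrev := congrArg (· (π.symm ⟨0, by omega⟩)) h
  simp only [complement, trans_apply, apply_symm_apply, Fin.revPerm_apply, Fin.ext_iff,
    Fin.val_rev] at hrev
  omega

end Equiv.Perm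

theorem Pat.complement {α β : Type*} [LinearOrder α] [LinearOrder β] {w : ℕ → α} {n : ℕ}
    {π : Equiv.Perm (Fin n)} (h : Pat w n π) {f : α → β} {s : Set α} (hf : StrictAntiOn f s)
    (hw : ∀ i, w i ∈ s) : Pat (f ∘ w) n π.complement := fun i j =>
  (LexLt.comp_strictAntiOn_iff hf (fun _ => hw _) (fun _ => hw _)).trans
    ((h j i).trans Fin.rev_lt_rev.symm)

theorem exists_pat_complement {n N : ℕ} {π : Equiv.Perm (Fin n)}
    (h : ∃ w : ℕ → ℕ, (∀ i, w i < N) ∧ Pat w n π) :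
    ∃ w : ℕ → ℕ, (∀ i, w i < N) ∧ Pat w n π.complement := by
  obtain ⟨w, hwN, hw⟩ := h
  have hrev : StrictAntiOn (fun a => N - 1 - a) (Set.Iio N) := fun a ha b hb hab => by
    simp only [Set.mem_Iio] at ha hb
    show N - 1 - b < N - 1 - a
    omega
  exact ⟨_, fun i => by have := hwN i; simp only [Function.comp_apply]; omega,
    hw.complement hrev hwN⟩

theorem minN_complement {n : ℕ} (π : Equiv.Perm (Fin n)) : minN π.complement = minN π := by
  unfold minN
  congr 1
  ext N
  refine ⟨fun h => ?_, exists_pat_complement⟩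
  have := exists_pat_complement (π := π.complement) h
  rwa [Equiv.Perm.complement_involutive π] at this

theorem stmt11_general {n N : ℕ} (hn : 2 ≤ n) :
    Even (Nat.card {π : Equiv.Perm (Fin n) // minN π = N}) := by
  let complement : {π : Equiv.Perm (Fin n) // minN π = N} → {π // minN π = N} :=
    fun π => ⟨π.1.complement, (minN_complement π.1).trans π.2⟩
  refine Function.Involutive.even_natCard_of_ne_self (f := complement) (fun π => ?_) (fun π h => ?_)
  · exact Subtype.ext (Equiv.Perm.complement_involutive π.1)
  · exact Equiv.Perm.complement_ne_self hn π.1 (congrArg Subtype.val h)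

/-- The numbers `a_{n,N} = |{π ∈ S_n : N(π) = N}|` are even. -/
theorem stmt11 {n N : ℕ} (hn : 2 ≤ n) (hN : 2 ≤ N) :
    Even (Nat.card {π : Equiv.Perm (Fin n) // minN π = N}) :=
  stmt11_general hn
end

section
/- Let w = u p^{n−1} 0^∞ with u ∈ {0,...,N−1}^{n−t−1} and p ∈ {0,...,N−1}^t a primitive word, 1 ≤ t ≤ n−1. Then Pat(w, Σ, n) is defined (the first n shifts of w are pairwise distinct in lexicographic order) if and only if p ≠ 0 (p is not the single letter 0). -/
/-- The infinite word `u p^{n-1} 0^∞`. -/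
def wordOf (u p : List ℕ) (n : ℕ) : ℕ → ℕ :=
  fun m => (u ++ (List.replicate (n - 1) p).flatten).getD m 0

theorem exists_perm_lt_iff_lt_iff_injective {β : Type*} [LinearOrder β] {n : ℕ} (f : Fin n → β) :
    (∃ π : Equiv.Perm (Fin n), ∀ i j, f i < f j ↔ π i < π j) ↔ Function.Injective f := by
  constructor
  · rintro ⟨π, hπ⟩ i j hij
    refine π.injective (le_antisymm ?_ ?_) <;> rw [← not_lt, ← hπ, hij] <;> exact lt_irrefl _
  · intro hf
    have hsorted : StrictMono (f ∘ Tuple.sort f) :=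
      (Tuple.monotone_sort f).strictMono_of_injective (hf.comp (Tuple.sort f).injective)
    refine ⟨(Tuple.sort f).symm, fun i j => ?_⟩
    simpa using hsorted.lt_iff_lt (a := (Tuple.sort f).symm i) (b := (Tuple.sort f).symm j)

theorem exists_pat_iff_injective_shift {α : Type*} [LinearOrder α] (w : ℕ → α) (n : ℕ) :
    (∃ π, Pat w n π) ↔ Function.Injective fun (i : Fin n) m => w (m + i) :=
  (exists_perm_lt_iff_lt_iff_injective fun (i : Fin n) => toLex fun m => w (m + i)).trans
    (toLex.injective.of_comp_iff _)

theorem eq_of_shift_eq_of_eventually_eq {α : Type*} {w : ℕ → α} {a : α} {i j L : ℕ}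
    (hij : i < j) (hshift : ∀ m, w (m + i) = w (m + j)) (hL : ∀ k, L ≤ k → w k = a)
    {k : ℕ} (hk : i ≤ k) : w k = a := by
  have hper : Function.Periodic (fun m => w (m + i)) (j - i) := fun m => by
    show w (m + (j - i) + i) = w (m + i)
    rw [hshift m]
    congr 1
    omega
  obtain ⟨m, rfl⟩ := Nat.exists_eq_add_of_le hk
  have := hper.nat_mul L m
  simp only [Nat.cast_id] at this
  rw [add_comm, ← this]
  exact hL _ (by have := Nat.le_mul_of_pos_right L (Nat.sub_pos_of_lt hij); omega)

theorem Primitive.ne_nil {α : Type*} {p : List α} (hp : Primitive p) : p ≠ [] := by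
  rintro rfl
  exact hp [] 2 one_lt_two (by simp)

theorem Primitive.exists_getD_ne {α : Type*} {p : List α} (hp : Primitive p) {d : α}
    (hpd : p ≠ [d]) : ∃ m, p.getD m d ≠ d := by
  by_contra! hconst
  have hrep : p = List.replicate p.length d :=
    List.ext_getElem (by simp) fun m hm _ => by simpa [hm] using hconst m
  match hlen : p.length with
  | 0 => exact hp.ne_nil (List.eq_nil_of_length_eq_zero hlen)
  | 1 => exact hpd (by rw [hrep, hlen]; rfl)
  | k + 2 => exact hp [d] (k + 2) (by omega) (by rw [hrep, hlen]; simp)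

theorem wordOf_eq_zero_of_length_le {u p : List ℕ} {n k : ℕ}
    (hk : (u ++ (List.replicate (n - 1) p).flatten).length ≤ k) : wordOf u p n k = 0 :=
  List.getD_eq_default _ _ hk

theorem wordOf_last_period {u p : List ℕ} {n : ℕ} (hn : 2 ≤ n) (m : ℕ) :
    wordOf u p n (u.length + (n - 2) * p.length + m) = p.getD m 0 := by
  have hrep : List.replicate (n - 1) p = List.replicate (n - 2) p ++ [p] := by
    rw [← List.replicate_succ']
    congr 1
    omega
  have hlen : (u ++ (List.replicate (n - 2) p).flatten).length = u.length + (n - 2) * p.length := by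
    simp [List.sum_replicate]
  rw [wordOf, hrep, List.flatten_append, List.flatten_singleton, ← List.append_assoc,
    List.getD_append_right _ _ _ _ (by omega), hlen, Nat.add_sub_cancel_left]

theorem wordOf_singleton_zero_eq_zero {u : List ℕ} {n k : ℕ} (hk : u.length ≤ k) :
    wordOf u [0] n k = 0 := by
  rw [wordOf, List.getD_append_right _ _ _ _ hk]
  simp

theorem wordOf_shift_ne {u p : List ℕ} {n : ℕ} (hprim : Primitive p) (hp0 : p ≠ [0])
    {i j : ℕ} (hij : i < j) (hjn : j < n) :
    (fun m => wordOf u p n (m + i)) ≠ fun m => wordOf u p n (m + j) := by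
  intro hshift
  obtain ⟨m, hm⟩ := hprim.exists_getD_ne hp0
  have hpos : 0 < p.length := List.length_pos_iff.2 hprim.ne_nil
  apply hm
  rw [← wordOf_last_period (u := u) (n := n) (by omega)]
  refine eq_of_shift_eq_of_eventually_eq hij (congrFun hshift)
    (fun k hk => wordOf_eq_zero_of_length_le hk) ?_
  have := Nat.le_mul_of_pos_right (n - 2) hpos
  omega

theorem wordOf_shift_injective {u p : List ℕ} {n : ℕ} (hprim : Primitive p) (hp0 : p ≠ [0]) :
    Function.Injective fun (i : Fin n) m => wordOf u p n (m + i) := by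
  intro i j hij
  by_contra hne
  rcases Fin.lt_or_lt_of_ne hne with hlt | hlt
  · exact wordOf_shift_ne hprim hp0 hlt j.2 hij
  · exact wordOf_shift_ne hprim hp0 hlt i.2 hij.symm

theorem stmt13_general {n t : ℕ} (ht2 : t ≤ n - 1)
    (u p : List ℕ) (hu : u.length = n - t - 1) (hp : p.length = t)
    (hprim : Primitive p) :
    (∃ π : Equiv.Perm (Fin n), Pat (wordOf u p n) n π) ↔ p ≠ [0] := by
  rw [exists_pat_iff_injective_shift]
  refine ⟨?_, wordOf_shift_injective hprim⟩
  rintro hinj rfl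
  obtain rfl : t = 1 := hp.symm
  have hzero : ∀ k, n - 2 ≤ k → wordOf u [0] n k = 0 := fun k hk =>
    wordOf_singleton_zero_eq_zero (by omega)
  have hshift : (fun m => wordOf u [0] n (m + (n - 2))) = fun m => wordOf u [0] n (m + (n - 1)) :=
    funext fun m => by rw [hzero _ (by omega), hzero _ (by omega)]
  have := Fin.mk.inj_iff.1 (@hinj ⟨n - 2, by omega⟩ ⟨n - 1, by omega⟩ hshift)
  omega

/-- For `w = u p^{n-1} 0^∞` with `p` primitive, `Pat(w,Σ,n)` is defined iff `p ≠ 0`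
(the single letter 0). -/
theorem stmt13 {n N t : ℕ} (ht1 : 1 ≤ t) (ht2 : t ≤ n - 1) (hn : 2 ≤ n)
    (u p : List ℕ) (hu : u.length = n - t - 1) (hp : p.length = t)
    (huN : ∀ x ∈ u, x < N) (hpN : ∀ x ∈ p, x < N) (hprim : Primitive p) :
    (∃ π : Equiv.Perm (Fin n), Pat (wordOf u p n) n π) ↔ p ≠ [0] :=
  stmt13_general ht2 u p hu hp hprim
end

section
/- Let w = u p^{n−1} 0^∞ with p primitive, |u| = n−t−1, |p| = t ≥ 1, and suppose π = Pat(w, Σ, n) is defined. Then π(n) ≠ n. -/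
theorem List.IsPrefix.not_lexLt_getD_bot {α : Type*} [LinearOrder α] [OrderBot α]
    {l₁ l₂ : List α} (h : l₁ <+: l₂) :
    ¬ LexLt (fun m => l₂.getD m ⊥) (fun m => l₁.getD m ⊥) := by
  rintro ⟨k, -, hk⟩
  by_cases hk₁ : k < l₁.length
  · have hk₂ : k < l₂.length := lt_of_lt_of_le hk₁ h.length_le
    simp only [List.getD_eq_getElem _ _ hk₁, List.getD_eq_getElem _ _ hk₂, h.getElem hk₁] at hk
    exact lt_irrefl _ hk
  · simp only [List.getD_eq_default _ _ (not_lt.mp hk₁)] at hk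
    exact not_lt_bot hk

theorem Pat.lexLt_of_apply_eq_last {α : Type*} [LinearOrder α] {w : ℕ → α} {n : ℕ}
    {π : Equiv.Perm (Fin n)} (h : Pat w n π) {i j : Fin n} (hij : i ≠ j)
    (hj : (π j).val = n - 1) :
    LexLt (fun m => w (m + i.val)) (fun m => w (m + j.val)) := by
  refine (h i j).2 (Fin.lt_def.2 ?_)
  have hne : (π i).val ≠ (π j).val := Fin.val_ne_of_ne (π.injective.ne hij)
  have := (π i).isLt
  omega

theorem List.flatten_replicate_prefix_succ {α : Type*} (k : ℕ) (p : List α) :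
    (List.replicate k p).flatten <+: (List.replicate (k + 1) p).flatten := by
  rw [List.replicate_succ', List.flatten_append]
  exact List.prefix_append _ _

theorem wordOf_add_length (u p : List ℕ) (n m : ℕ) :
    wordOf u p n (m + u.length) = (List.replicate (n - 1) p).flatten.getD m 0 := by
  simp only [wordOf]
  rw [List.getD_append_right _ _ _ _ (Nat.le_add_left _ _), Nat.add_sub_cancel]

theorem wordOf_add_length_add_length (u p : List ℕ) (k m : ℕ) :
    wordOf u p (k + 2) (m + p.length + u.length) = (List.replicate k p).flatten.getD m 0 := by
  rw [wordOf_add_length, show k + 2 - 1 = k + 1 from rfl, List.replicate_succ, List.flatten_cons,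
    List.getD_append_right _ _ _ _ (Nat.le_add_left _ _), Nat.add_sub_cancel]

/-- If `w = u p^{n-1} 0^∞` with `p` primitive, `|u| = n-t-1`, `|p| = t ≥ 1`, and
`π = Pat(w,Σ,n)` is defined, then `π(n) ≠ n`. -/
theorem stmt14 {n t : ℕ} (ht1 : 1 ≤ t) (ht2 : t ≤ n - 1)
    (u p : List ℕ) (hu : u.length = n - t - 1) (hp : p.length = t)
    (π : Equiv.Perm (Fin n)) (hPat : Pat (wordOf u p n) n π) :
    (π ⟨n - 1, by omega⟩).val ≠ n - 1 := by
  intro hlast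
  obtain ⟨k, rfl⟩ : ∃ k, n = k + 2 := ⟨n - 2, by omega⟩
  have hlex := hPat.lexLt_of_apply_eq_last (i := ⟨u.length, by omega⟩)
    (Fin.ne_of_val_ne (by simp only; omega)) hlast
  refine (List.flatten_replicate_prefix_succ k p).not_lexLt_getD_bot ?_
  convert hlex using 2 with m m
  · exact (wordOf_add_length u p (k + 2) m).symm
  · rw [show m + (k + 2 - 1) = m + p.length + u.length by omega, wordOf_add_length_add_length]
    rfl
end

section
/- Define the map Φ on marked n-cycles of the form π̂ = [⋆, 1, π̂(3), ..., π̂(n)] by Φ(π̂) = [π̂(3)−2, π̂(4)−2, ..., π̂(n)−2]. Then Φ is a well-defined bijection from E_n = {π̂ ∈ T_n : π̂ = [⋆, 1, ...]} onto T⁰_{n−2}, the set of sequences obtained from (n−2)-cycles in one-line notation by replacing one entry with 0; moreover Φ preserves the number of descents (where descents of an element of T⁰_{n−2} count all positions including those involving the 0 entry, and descents of π̂ ∈ E_n are computed after deleting the ⋆). -/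
/-!
Write `n = m + 2`. Since `σ 1 = 0`, the cycle of `σ` passes through `x ↦ 1 ↦ 0 ↦ σ 0`; cutting
the block `1 ↦ 0` out of it and shifting the remaining values `2, …, m + 1` down to `0, …, m - 1`
leaves an `m`-cycle `τ`, with `σ (i + 2) = τ i + 2` except at the position `i₀` where
`σ (i₀ + 2) = 1`. Hence `Φ σ` is the one-line notation of `τ` with its entry at `i₀` replaced by
`0`, and `σ` is recovered from `(τ, i₀)` by reinserting the block. Both cycle conditions follow
from one principle: a map `π` with `π (σ x)` always in the `τ`-cycle of `π x` carries `σ`-cycles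
into `τ`-cycles. Descents are preserved because the entry `σ 1 = 0` is the minimum and
`x ↦ x - 1` is strictly monotone on the positive entries.
-/

open Equiv Equiv.Perm Function Set

namespace Equiv.Perm

variable {α β : Type*} {σ : Perm α} {τ : Perm β}

theorem SameCycle.map_of_forall_sameCycle [Finite α] {π : α → β}
    (hπ : ∀ x, τ.SameCycle (π x) (π (σ x))) {x y : α} (h : σ.SameCycle x y) :
    τ.SameCycle (π x) (π y) := by
  obtain ⟨k, rfl⟩ := h.exists_nat_pow_eq
  clear h
  induction k with
  | zero => rfl
  | succ k ih =>
    rw [pow_succ', mul_apply]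
    exact ih.trans (hπ _)

theorem IsCycleOn.univ_of_forall_sameCycle [Finite α] (hσ : σ.IsCycleOn univ) (π : α → β)
    (hπ : ∀ x, τ.SameCycle (π x) (π (σ x))) (hcover : ∀ y, ∃ x, τ.SameCycle y (π x)) :
    τ.IsCycleOn univ := by
  refine ⟨τ.bijective.bijOn_univ, fun y _ y' _ => ?_⟩
  obtain ⟨x, hx⟩ := hcover y
  obtain ⟨x', hx'⟩ := hcover y'
  exact hx.trans ((SameCycle.map_of_forall_sameCycle hπ (hσ.2 trivial trivial)).trans hx'.symm)

theorem eq_of_forall_ne_apply_eq {σ σ' : Perm α} (a : α) (h : ∀ x, x ≠ a → σ x = σ' x) :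
    σ = σ' := by
  ext x
  by_cases hx : x = a
  · subst hx
    obtain ⟨y, hy⟩ := σ'.surjective (σ x)
    by_cases hyx : y = x
    · rw [← hy, hyx]
    · exact absurd (σ.injective ((h y hyx).trans hy)) hyx
  · exact h x hx

end Equiv.Perm

theorem Function.Injective.exists_perm_semiconj {α β : Type*} [Finite β] {f : β → α}
    (hf : Injective f) (ρ : Perm α) (hρ : MapsTo ρ (range f) (range f)) :
    ∃ τ : Perm β, Semiconj f τ ρ := by
  choose g hg using fun i => hρ (mem_range_self i)
  have hg_inj : Injective g := fun i j hij =>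
    hf (ρ.injective (by rw [← hg i, ← hg j, hij]))
  exact ⟨Equiv.ofBijective g hg_inj.bijective_of_finite, hg⟩

namespace Fin

theorem eq_zero_or_eq_one_or_exists_succ_succ_eq {m : ℕ} (x : Fin (m + 2)) :
    x = 0 ∨ x = 1 ∨ ∃ i : Fin m, i.succ.succ = x := by
  rcases x.eq_zero_or_eq_succ with rfl | ⟨j, rfl⟩
  · exact Or.inl rfl
  rcases j.eq_zero_or_eq_succ with rfl | ⟨i, rfl⟩
  · exact Or.inr (Or.inl rfl)
  · exact Or.inr (Or.inr ⟨i, rfl⟩)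

end Fin

section MarkedCycles

variable {m : ℕ}

theorem Equiv.Perm.apply_ne_zero_of_apply_one {σ : Perm (Fin (m + 2))} (h1 : σ 1 = 0)
    {x : Fin (m + 2)} (hx : x ≠ 1) : σ x ≠ 0 :=
  fun h => hx (σ.injective (h.trans h1.symm))

theorem Equiv.Perm.IsCycleOn.apply_zero_ne_one (hm : 0 < m) {σ : Perm (Fin (m + 2))}
    (hσ : σ.IsCycleOn univ) (h1 : σ 1 = 0) : σ 0 ≠ 1 := by
  intro h0
  have hmaps : MapsTo σ {0, 1} {0, 1} := by
    rintro x (rfl | rfl) <;> simp [h0, h1]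
  let x : Fin (m + 2) := (⟨0, hm⟩ : Fin m).succ.succ
  obtain ⟨k, hk⟩ := (hσ.2 (mem_univ 0) (mem_univ x)).exists_nat_pow_eq
  have hx := hmaps.iterate k (by simp : (0 : Fin (m + 2)) ∈ ({0, 1} : Set _))
  rw [← coe_pow, hk] at hx
  simp [x] at hx

/-- `σ` arises from `τ` by shifting all points up by `2` and inserting the block `1 ↦ 0` into the
cycle right after `i₀ + 2`. -/
def IsBlockInsertion (σ : Perm (Fin (m + 2))) (τ : Perm (Fin m)) (i₀ : Fin m) : Prop :=
  σ 1 = 0 ∧ σ 0 = (τ i₀).succ.succ ∧ ∀ i, σ i.succ.succ = if i = i₀ then 1 else (τ i).succ.succ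

namespace IsBlockInsertion

variable {σ : Perm (Fin (m + 2))} {τ : Perm (Fin m)} {i₀ : Fin m}

theorem val_sub_one (h : IsBlockInsertion σ τ i₀) (i : Fin m) :
    (σ i.succ.succ).val - 1 = if i = i₀ then 0 else (τ i).val + 1 := by
  rw [h.2.2]
  split_ifs <;> simp

theorem isCycleOn_iff (h : IsBlockInsertion σ τ i₀) :
    σ.IsCycleOn univ ↔ τ.IsCycleOn univ := by
  obtain ⟨h1, h0, hσ⟩ := h
  have hσi₀ : σ i₀.succ.succ = 1 := by rw [hσ, if_pos rfl]
  have hσi : ∀ i, i ≠ i₀ → σ i.succ.succ = (τ i).succ.succ := fun i hi => by rw [hσ, if_neg hi]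
  constructor
  · intro hσc
    -- `π` collapses the block `1 ↦ 0` onto `τ i₀`, the point that follows it
    let π : Fin (m + 2) → Fin m := Fin.cases (τ i₀) (Fin.cases (τ i₀) id)
    have hπ0 : π 0 = τ i₀ := rfl
    have hπ1 : π 1 = τ i₀ := by rw [← Fin.succ_zero_eq_one]; rfl
    have hπ : ∀ i : Fin m, π i.succ.succ = i := fun _ => rfl
    refine hσc.univ_of_forall_sameCycle π (fun x => ?_) (fun i => ⟨i.succ.succ, by rw [hπ]⟩)
    rcases x.eq_zero_or_eq_one_or_exists_succ_succ_eq with rfl | rfl | ⟨i, rfl⟩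
    · rw [h0, hπ, hπ0]
    · rw [h1, hπ0, hπ1]
    · by_cases hi : i = i₀
      · rw [hπ, hi, hσi₀, hπ1]
        exact (SameCycle.refl τ i₀).apply_right
      · rw [hπ, hσi i hi, hπ]
        exact (SameCycle.refl τ i).apply_right
  · intro hτc
    have hp0 : SameCycle σ 0 (τ i₀).succ.succ := by
      rw [← h0]
      exact (SameCycle.refl σ 0).apply_right
    have hp1 : SameCycle σ 1 (τ i₀).succ.succ :=
      (SameCycle.refl σ 1).apply_right.trans (by rw [h1]; exact hp0)
    refine hτc.univ_of_forall_sameCycle (fun i => i.succ.succ) (fun i => ?_) (fun x => ?_)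
    · by_cases hi : i = i₀
      · rw [hi]
        exact (SameCycle.refl σ _).apply_right.trans (by rw [hσi₀]; exact hp1)
      · exact hσi i hi ▸ (SameCycle.refl σ _).apply_right
    · rcases x.eq_zero_or_eq_one_or_exists_succ_succ_eq with rfl | rfl | ⟨i, rfl⟩
      · exact ⟨τ i₀, hp0⟩
      · exact ⟨τ i₀, hp1⟩
      · exact ⟨i, SameCycle.refl σ _⟩

end IsBlockInsertion

theorem exists_isBlockInsertion (τ : Perm (Fin m)) (i₀ : Fin m) :
    ∃ σ : Perm (Fin (m + 2)), IsBlockInsertion σ τ i₀ := by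
  let e : Fin m ↪ Fin (m + 2) := (Fin.succEmb m).trans (Fin.succEmb (m + 1))
  have he0 : (0 : Fin (m + 2)) ∉ range e := by rintro ⟨i, hi⟩; exact Fin.succ_ne_zero _ hi
  have he1 : (1 : Fin (m + 2)) ∉ range e := by rintro ⟨i, hi⟩; exact Fin.succ_succ_ne_one i hi
  set p : Fin (m + 2) := (τ i₀).succ.succ
  let σ := swap 1 p * swap 0 1 * τ.viaEmbedding e
  refine ⟨σ, ?_, ?_, fun i => ?_⟩
  · simp [σ, viaEmbedding_apply_of_notMem _ _ _ he1, swap_apply_of_ne_of_ne,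
      (Fin.succ_ne_zero _).symm, p]
  · simp [σ, viaEmbedding_apply_of_notMem _ _ _ he0, p]
  · have hi : σ i.succ.succ = swap 1 p (τ i).succ.succ := by
      simp only [σ, mul_apply, show τ.viaEmbedding e i.succ.succ = (τ i).succ.succ from
        viaEmbedding_apply τ e i, swap_apply_of_ne_of_ne (Fin.succ_ne_zero _)
        (Fin.succ_succ_ne_one _)]
    split_ifs with h
    · rw [hi, h, swap_apply_right]
    · rw [hi, swap_apply_of_ne_of_ne (Fin.succ_succ_ne_one _)]
      exact fun h' => h (τ.injective (Fin.succ_injective _ (Fin.succ_injective _ h')))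

theorem exists_isBlockInsertion_of_isCycleOn (hm : 0 < m) {σ : Perm (Fin (m + 2))}
    (hσ : σ.IsCycleOn univ) (h1 : σ 1 = 0) : ∃ τ i₀, IsBlockInsertion σ τ i₀ := by
  have h00 : σ 0 ≠ 0 := apply_ne_zero_of_apply_one h1 zero_ne_one
  have h01 : σ 0 ≠ 1 := hσ.apply_zero_ne_one hm h1
  obtain ⟨i₀, hi₀⟩ : ∃ i₀ : Fin m, σ i₀.succ.succ = 1 := by
    rcases (σ.symm 1).eq_zero_or_eq_one_or_exists_succ_succ_eq with h | h | ⟨i, h⟩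
    · exact absurd (by rw [← h, apply_symm_apply]) h01
    · exact absurd (by simpa [h1] using (congrArg σ h).symm) (zero_ne_one' (Fin (m + 2)))
    · exact ⟨i, by rw [h, apply_symm_apply]⟩
  -- `ρ` splits the cycle of `σ` into the transposition `(0 1)` and a cycle on the other points
  set ρ := swap 1 (σ 0) * σ with hρ
  have hρ0 : ρ 0 = 1 := by simp [ρ]
  have hρ1 : ρ 1 = 0 := by simp [ρ, h1, swap_apply_of_ne_of_ne, Ne.symm h00]
  have he : Injective fun i : Fin m => (i.succ.succ : Fin (m + 2)) :=
    (Fin.succ_injective _).comp (Fin.succ_injective _)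
  obtain ⟨τ, hτ⟩ : ∃ τ : Perm (Fin m), ∀ i, (τ i).succ.succ = ρ i.succ.succ :=
    he.exists_perm_semiconj ρ (by
      rintro _ ⟨i, rfl⟩
      rcases (ρ i.succ.succ).eq_zero_or_eq_one_or_exists_succ_succ_eq with h | h | h
      · exact absurd (ρ.injective (h.trans hρ1.symm)) (Fin.succ_succ_ne_one i)
      · exact absurd (ρ.injective (h.trans hρ0.symm)) (Fin.succ_ne_zero _)
      · exact h)
  refine ⟨τ, i₀, h1, by rw [hτ, hρ, mul_apply, hi₀, swap_apply_left], fun i => ?_⟩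
  split_ifs with hi
  · rw [hi, hi₀]
  · rw [hτ i, hρ, mul_apply, swap_apply_of_ne_of_ne]
    · exact fun h => hi (he (σ.injective (h.trans hi₀.symm)))
    · exact fun h => Fin.succ_ne_zero _ (σ.injective h)

theorem Equiv.Perm.one_le_val_apply_succ_succ {σ : Perm (Fin (m + 2))} (h1 : σ 1 = 0)
    (i : Fin m) : 1 ≤ (σ i.succ.succ).val :=
  Nat.one_le_iff_ne_zero.2 (Fin.val_ne_zero_iff.2
    (apply_ne_zero_of_apply_one h1 (Fin.succ_succ_ne_one i)))

theorem Equiv.Perm.eq_of_apply_one_of_val_sub_one_eq {σ σ' : Perm (Fin (m + 2))} (h1 : σ 1 = 0)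
    (h1' : σ' 1 = 0) (h : ∀ i : Fin m, (σ i.succ.succ).val - 1 = (σ' i.succ.succ).val - 1) :
    σ = σ' := by
  refine eq_of_forall_ne_apply_eq 0 fun x hx => ?_
  rcases x.eq_zero_or_eq_one_or_exists_succ_succ_eq with rfl | rfl | ⟨i, rfl⟩
  · exact absurd rfl hx
  · rw [h1, h1']
  · have := h i
    have := one_le_val_apply_succ_succ h1 i
    have := one_le_val_apply_succ_succ h1' i
    exact Fin.ext (by omega)

theorem Equiv.Perm.card_descents_eq {σ : Perm (Fin (m + 2))} (h1 : σ 1 = 0)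
    {s : Fin (m + 2) → Fin (m + 2)} (hs : ∀ a, (s a).val = (a.val + 1) % (m + 2))
    {s₂ : Fin m → Fin m} (hs₂ : ∀ a, (s₂ a).val = (a.val + 1) % m)
    {w : Fin m → ℕ} (hw : ∀ i, w i = (σ i.succ.succ).val - 1) :
    (Finset.univ.filter fun i : Fin (m + 2) =>
        1 ≤ i.val ∧ i.val + 1 < m + 2 ∧ σ (s i) < σ i).card =
      (Finset.univ.filter fun i : Fin m => i.val + 1 < m ∧ w (s₂ i) < w i).card := by
  have hs_succ : ∀ i : Fin m, i.val + 1 < m → s i.succ.succ = (s₂ i).succ.succ := fun i hi =>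
    Fin.ext (by simp only [hs, hs₂, Fin.val_succ, Nat.mod_eq_of_lt hi,
      Nat.mod_eq_of_lt (show i.val + 1 + 1 + 1 < m + 2 by omega)])
  have hlt : ∀ i j : Fin m, σ i.succ.succ < σ j.succ.succ ↔ w i < w j := by
    intro i j
    have := one_le_val_apply_succ_succ h1 i
    have := one_le_val_apply_succ_succ h1 j
    rw [hw, hw, Fin.lt_def]
    omega
  symm
  refine Finset.card_bij (fun i _ => i.succ.succ) (fun i hi => ?_)
    (fun i _ j _ h => Fin.succ_injective _ (Fin.succ_injective _ h)) (fun x hx => ?_)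
  · simp only [Finset.mem_filter, Finset.mem_univ, true_and, Fin.val_succ] at hi ⊢
    exact ⟨by omega, by omega, by rw [hs_succ i hi.1, hlt]; exact hi.2⟩
  · simp only [Finset.mem_filter, Finset.mem_univ, true_and] at hx
    obtain ⟨hx1, hxm, hdes⟩ := hx
    rcases x.eq_zero_or_eq_one_or_exists_succ_succ_eq with rfl | rfl | ⟨i, rfl⟩
    · simp at hx1
    · rw [h1] at hdes
      exact absurd hdes (Fin.not_lt_zero _)
    · have hi : i.val + 1 < m := by simp only [Fin.val_succ] at hxm; omega
      rw [hs_succ i hi, hlt] at hdes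
      exact ⟨i, by simp only [Finset.mem_filter, Finset.mem_univ, true_and]; exact ⟨hi, hdes⟩, rfl⟩

end MarkedCycles

/-- Positions and values are 0-indexed: `σ ∈ E` has one-line notation `[⋆, 1, σ 2 + 1, …]`
(the mark at position `0`), so `Φ σ i = σ (i + 2) - 1` is the entry `σ (i + 2) + 1` lowered
by `2`. -/
theorem stmt19 {n : ℕ} (hn : 3 ≤ n)
    (E : Set (Equiv.Perm (Fin n)))
    (hE : E = {σ | σ.IsCycleOn Set.univ ∧ σ ⟨1, by omega⟩ = ⟨0, by omega⟩})
    (T0 : Set (Fin (n - 2) → ℕ))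
    (hT0 : T0 = {f | ∃ (τ : Equiv.Perm (Fin (n - 2))) (i0 : Fin (n - 2)),
        τ.IsCycleOn Set.univ ∧ ∀ i, f i = if i = i0 then 0 else (τ i).val + 1})
    (Φ : Equiv.Perm (Fin n) → (Fin (n - 2) → ℕ))
    (hΦ : ∀ σ i, Φ σ i = (σ ⟨i.val + 2, by have := i.isLt; omega⟩).val - 1)
    (s : Fin n → Fin n) (hs : ∀ a, (s a).val = (a.val + 1) % n)
    (s2 : Fin (n - 2) → Fin (n - 2)) (hs2 : ∀ a, (s2 a).val = (a.val + 1) % (n - 2)) :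
    Set.BijOn Φ E T0 ∧
    ∀ σ ∈ E,
      (Finset.univ.filter (fun i : Fin n =>
          1 ≤ i.val ∧ i.val + 1 < n ∧ σ (s i) < σ i)).card =
      (Finset.univ.filter (fun i : Fin (n - 2) =>
          i.val + 1 < n - 2 ∧ Φ σ (s2 i) < Φ σ i)).card := by
  obtain ⟨m, rfl⟩ : ∃ m, n = m + 2 := ⟨n - 2, by omega⟩
  simp only [Fin.mk_one, Fin.zero_eta] at hE
  subst hE hT0
  have hΦ' : ∀ σ (i : Fin m), Φ σ i = (σ i.succ.succ).val - 1 := hΦ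
  refine ⟨⟨fun σ ⟨hσ, h1⟩ => ?_, fun σ ⟨_, h1⟩ σ' ⟨_, h1'⟩ h => ?_, fun f ⟨τ, i₀, hτ, hf⟩ => ?_⟩,
    fun σ ⟨_, h1⟩ => ?_⟩
  · obtain ⟨τ, i₀, hins⟩ := exists_isBlockInsertion_of_isCycleOn (by omega) hσ h1
    exact ⟨τ, i₀, hins.isCycleOn_iff.1 hσ, fun i => (hΦ' σ i).trans (hins.val_sub_one i)⟩
  · exact eq_of_apply_one_of_val_sub_one_eq h1 h1' fun i => by rw [← hΦ', ← hΦ', h]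
  · obtain ⟨σ, hins⟩ := exists_isBlockInsertion τ i₀
    exact ⟨σ, ⟨hins.isCycleOn_iff.2 hτ, hins.1⟩,
      funext fun i => by rw [hΦ', hins.val_sub_one, hf]⟩
  · exact card_descents_eq h1 hs hs2 (hΦ' σ)
end
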